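/- Lemma 1 of the main theorem: under hypotheses (i)–(vi) of the stated setting, for all n, m ≥ 1 and every u in the zero-weight subspace V_0, one has I_n(I_m u) = Tr_{1…n+m}[ L_1 ⋯ L_n L_{n+1} ⋯ L_{n+m} · ℐ^{(1,n)}(x−2γh^{(n+1,n+m)}) · ℐ^{(n+1,n+m)}(x) ] u, where for k < l, ℐ^{(k,l)}(x) := R̂_{k,k+1}(x−2γh^{(k+2,l)}) R̂_{k+1,k+2}(x−2γh^{(k+3,l)}) ⋯ R̂_{l−1,l}(x), and ℐ^{(1,n)}(x−2γh^{(n+1,n+m)}) denotes ℐ^{(1,n)} with its argument additionally shifted according to the basis indices in factors n+1,…,n+m; here I_n and I_m are realized on the auxiliary factors 1,…,n and n+1,…,n+m respectively. -/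

import Mathlib

noncomputable section
open Matrix Complex
open scoped BigOperators

variable (N : ℕ) (γ : ℂ)
variable {W : Type} [AddCommGroup W] [Module ℂ W]

def sh12 (S : (Fin N → ℂ) → Matrix (Fin N × Fin N) (Fin N × Fin N) ℂ)
    (x : Fin N → ℂ) (s : ℂ) :
    Matrix (Fin N × Fin N × Fin N) (Fin N × Fin N × Fin N) ℂ :=
  fun p q => if p.2.2 = q.2.2 then
    S (x + s • (Pi.single q.2.2 1 : Fin N → ℂ)) (p.1, p.2.1) (q.1, q.2.1) else 0

def sh13 (S : (Fin N → ℂ) → Matrix (Fin N × Fin N) (Fin N × Fin N) ℂ)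
    (x : Fin N → ℂ) (s : ℂ) :
    Matrix (Fin N × Fin N × Fin N) (Fin N × Fin N × Fin N) ℂ :=
  fun p q => if p.2.1 = q.2.1 then
    S (x + s • (Pi.single q.2.1 1 : Fin N → ℂ)) (p.1, p.2.2) (q.1, q.2.2) else 0

def sh23 (S : (Fin N → ℂ) → Matrix (Fin N × Fin N) (Fin N × Fin N) ℂ)
    (x : Fin N → ℂ) (s : ℂ) :
    Matrix (Fin N × Fin N × Fin N) (Fin N × Fin N × Fin N) ℂ :=
  fun p q => if p.1 = q.1 then
    S (x + s • (Pi.single q.1 1 : Fin N → ℂ)) (p.2.1, p.2.2) (q.2.1, q.2.2) else 0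

/-- (iii) the dynamical Yang–Baxter equation -/
def DYBE (R : (Fin N → ℂ) → Matrix (Fin N × Fin N) (Fin N × Fin N) ℂ) : Prop :=
  ∀ x : Fin N → ℂ,
    sh12 N R x γ * sh13 N R x (-γ) * sh23 N R x γ =
    sh23 N R x (-γ) * sh13 N R x γ * sh12 N R x (-γ)

/-- (i) zero-weight condition -/
def ZeroWeight (R : (Fin N → ℂ) → Matrix (Fin N × Fin N) (Fin N × Fin N) ℂ) : Prop :=
  ∀ x : Fin N → ℂ, ∀ i j k l : Fin N,
    (Pi.single i 1 : Fin N → ℂ) + Pi.single j 1 ≠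
      (Pi.single k 1 : Fin N → ℂ) + Pi.single l 1 →
    R x (i, j) (k, l) = 0

/-- (ii) translation condition -/
def TransInv (R : (Fin N → ℂ) → Matrix (Fin N × Fin N) (Fin N × Fin N) ℂ) : Prop :=
  ∀ x : Fin N → ℂ, ∀ t : ℂ, ∀ i j k l : Fin N,
    R (x + t • ((Pi.single i 1 : Fin N → ℂ) + Pi.single j 1)) (i, j) (k, l) =
      R x (i, j) (k, l)

/-- the quantum space: W-valued functions on ℂ^N -/
abbrev Vsp (N : ℕ) (W : Type) [AddCommGroup W] [Module ℂ W] := (Fin N → ℂ) → W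

/-- membership in the zero-weight subspace V₀ (functions valued in W₀) -/
def inV0 (π : (Fin N → ℂ) → Module.End ℂ W) (u : Vsp N W) : Prop :=
  ∀ x, π 0 (u x) = u x

/-- the dynamical scalar operator f(x + s·h^{(q)}) on V -/
def Phi (M : Finset (Fin N → ℂ)) (π : (Fin N → ℂ) → Module.End ℂ W)
    (s : ℂ) (f : (Fin N → ℂ) → ℂ) (u : Vsp N W) : Vsp N W :=
  fun x => ∑ μ ∈ M, f (x + s • μ) • π μ (u x)

/-- L₁ = Σ e_{ab}⊗Id⊗L_{ab} on functions ℂ^N → ℂ^N⊗ℂ^N⊗W -/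
def Lax1 (L : Fin N → Fin N → (Vsp N W →ₗ[ℂ] Vsp N W))
    (u : (Fin N → ℂ) → Fin N × Fin N → W) : (Fin N → ℂ) → Fin N × Fin N → W :=
  fun x p => ∑ b : Fin N, L p.1 b (fun y => u y (b, p.2)) x

/-- L₂ = Σ Id⊗e_{ab}⊗L_{ab} -/
def Lax2 (L : Fin N → Fin N → (Vsp N W →ₗ[ℂ] Vsp N W))
    (u : (Fin N → ℂ) → Fin N × Fin N → W) : (Fin N → ℂ) → Fin N × Fin N → W :=
  fun x p => ∑ b : Fin N, L p.2 b (fun y => u y (p.1, b)) x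

/-- R₁₂(x + s·h^{(q)}) acting on functions ℂ^N → ℂ^N⊗ℂ^N⊗W -/
def Rop (R : (Fin N → ℂ) → Matrix (Fin N × Fin N) (Fin N × Fin N) ℂ)
    (M : Finset (Fin N → ℂ)) (π : (Fin N → ℂ) → Module.End ℂ W) (s : ℂ)
    (u : (Fin N → ℂ) → Fin N × Fin N → W) : (Fin N → ℂ) → Fin N × Fin N → W :=
  fun x p => ∑ r : Fin N × Fin N, ∑ μ ∈ M, R (x + s • μ) p r • π μ (u x r)

/-- sum of basis vectors δ_{σ(i)} over factors with 0-based positions in [s,t) -/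
def hsum (p : ℕ) (s t : ℕ) (σ : Fin p → Fin N) : Fin N → ℂ :=
  ∑ i : Fin p, if s ≤ (i : ℕ) ∧ (i : ℕ) < t then (Pi.single (σ i) 1 : Fin N → ℂ) else 0

/-- R̂ = P·R placed in (0-based) factors a, b of (ℂ^N)^{⊗p}, with σ-dependent
    evaluation point `f σ` -/
def RhatPair (R : (Fin N → ℂ) → Matrix (Fin N × Fin N) (Fin N × Fin N) ℂ)
    (p : ℕ) (a b : ℕ) (f : (Fin p → Fin N) → Fin N → ℂ) :
    Matrix (Fin p → Fin N) (Fin p → Fin N) ℂ :=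
  if h : a < p ∧ b < p then
    Matrix.of fun σ σ' =>
      if ∀ i : Fin p, (i : ℕ) ≠ a → (i : ℕ) ≠ b → σ i = σ' i then
        R (f σ) (σ ⟨b, h.2⟩, σ ⟨a, h.1⟩) (σ' ⟨a, h.1⟩, σ' ⟨b, h.2⟩)
      else 0
  else 1

/-- 𝓘^{(k,l)} (1-based labels k..l):
    R̂_{k,k+1}(·−2γh^{(k+2,l)}) ⋯ R̂_{l−1,l}(·), with evaluation point `base σ` -/
def calI (R : (Fin N → ℂ) → Matrix (Fin N × Fin N) (Fin N × Fin N) ℂ)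
    (p : ℕ) (k l : ℕ) (base : (Fin p → Fin N) → Fin N → ℂ) :
    Matrix (Fin p → Fin N) (Fin p → Fin N) ℂ :=
  ((List.range' k (l - k)).map (fun j =>
    RhatPair N R p (j - 1) j
      (fun σ => base σ - (2 * γ) • hsum N p (j + 1) l σ))).prod

/-- the Lax operator L placed in auxiliary factor a of (ℂ^N)^{⊗n} ⊗ V -/
def LopAux (L : Fin N → Fin N → (Vsp N W →ₗ[ℂ] Vsp N W)) (n : ℕ) (a : Fin n)
    (u : (Fin N → ℂ) → (Fin n → Fin N) → W) : (Fin N → ℂ) → (Fin n → Fin N) → W :=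
  fun x σ => ∑ b : Fin N, L (σ a) b (fun y => u y (Function.update σ a b)) x

/-- the composition L₁ L₂ ⋯ L_n -/
def LopChain (L : Fin N → Fin N → (Vsp N W →ₗ[ℂ] Vsp N W)) (n : ℕ) :
    ((Fin N → ℂ) → (Fin n → Fin N) → W) → ((Fin N → ℂ) → (Fin n → Fin N) → W) :=
  (List.finRange n).foldr (fun a f => LopAux N L n a ∘ f) id

/-- multiplication by a matrix-valued function of x on the auxiliary factors -/
def mulMat (n : ℕ) (A : (Fin N → ℂ) → Matrix (Fin n → Fin N) (Fin n → Fin N) ℂ)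
    (u : (Fin N → ℂ) → (Fin n → Fin N) → W) : (Fin N → ℂ) → (Fin n → Fin N) → W :=
  fun x σ => ∑ σ' : Fin n → Fin N, A x σ σ' • u x σ'

/-- embedding of V into (ℂ^N)^{⊗n} ⊗ V at auxiliary basis index σ -/
def emb (n : ℕ) (σ : Fin n → Fin N) (u : Vsp N W) :
    (Fin N → ℂ) → (Fin n → Fin N) → W :=
  fun x σ' => if σ' = σ then u x else 0

/-- I_n = Tr_{1…n}[ L₁ ⋯ L_n R̂_{12}(x−2γh^{(3,n)}) ⋯ R̂_{n−1,n}(x) ] ∈ End(V) -/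
def In (R : (Fin N → ℂ) → Matrix (Fin N × Fin N) (Fin N × Fin N) ℂ)
    (L : Fin N → Fin N → (Vsp N W →ₗ[ℂ] Vsp N W)) (n : ℕ) (u : Vsp N W) : Vsp N W :=
  fun x => ∑ σ : Fin n → Fin N,
    LopChain N L n
      (mulMat N n (fun y => calI N γ R n 1 n (fun _ => y)) (emb N n σ u)) x σ

/-- the combined operator
    Tr_{1…n+m}[ L₁ ⋯ L_{n+m} 𝓘^{(1,n)}(x−2γh^{(n+1,n+m)}) 𝓘^{(n+1,n+m)}(x) ] -/
def Inm (R : (Fin N → ℂ) → Matrix (Fin N × Fin N) (Fin N × Fin N) ℂ)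
    (L : Fin N → Fin N → (Vsp N W →ₗ[ℂ] Vsp N W)) (n m : ℕ) (u : Vsp N W) : Vsp N W :=
  fun x => ∑ σ : Fin (n + m) → Fin N,
    LopChain N L (n + m)
      (mulMat N (n + m)
        (fun y =>
          calI N γ R (n + m) 1 n
              (fun σ' => y - (2 * γ) • hsum N (n + m) n (n + m) σ') *
            calI N γ R (n + m) (n + 1) (n + m) (fun _ => y))
        (emb N (n + m) σ u)) x σ

/-!
On both sides the trace runs over configurations `τ ∈ [N]^n`, `σ ∈ [N]^m` of the auxiliary
factors. On the left, the entry of `𝓘^{(1,n)}(x)` is a scalar function of `x` standing in front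
of the chain `L_{n+1} ⋯ L_{n+m}`. By the grading (iv) and the shift relation (v), moving such a
function through `L_{ab}` shifts its argument by `-γ(δ_a + δ_b)`, so moving it through the whole
chain, from index `σ` to index `β`, shifts it by `-γ(h(σ) + h(β))`. Since `R` has zero weight,
`𝓘^{(n+1,n+m)}` only connects configurations of equal weight, so this shift is `-2γ h(β)`:
the shift in `𝓘^{(1,n)}(x - 2γh^{(n+1,n+m)})`. On the right, writing configurations of length
`n + m` as `Fin.append ρ β` splits the chain `L_1 ⋯ L_{n+m}` into two chains and makes both
factors `𝓘` block diagonal.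
-/

lemma Fin.update_append_castAdd {α : Type*} [DecidableEq α] {n m : ℕ} (ρ : Fin n → α)
    (β : Fin m → α) (a : Fin n) (b : α) :
    Function.update (Fin.append ρ β) (Fin.castAdd m a) b =
      Fin.append (Function.update ρ a b) β := by
  funext i
  induction i using Fin.addCases with
  | left i => simp [Function.update_apply]
  | right j => simp [Function.update_apply, Fin.ext_iff]; omega

lemma Fin.update_append_natAdd {α : Type*} [DecidableEq α] {n m : ℕ} (ρ : Fin n → α)
    (β : Fin m → α) (a : Fin m) (b : α) :
    Function.update (Fin.append ρ β) (Fin.natAdd n a) b =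
      Fin.append ρ (Function.update β a b) := by
  funext i
  induction i using Fin.addCases with
  | left i => simp [Function.update_apply, Fin.ext_iff]; omega
  | right j => simp [Function.update_apply]

lemma Fin.append_mk_left {α : Type*} {n m i : ℕ} (ρ : Fin n → α) (β : Fin m → α) (h : i < n)
    (h' : i < n + m) : Fin.append ρ β ⟨i, h'⟩ = ρ ⟨i, h⟩ :=
  Fin.append_left ρ β ⟨i, h⟩

lemma Fin.append_mk_right {α : Type*} {n m i : ℕ} (ρ : Fin n → α) (β : Fin m → α) (h : i < m)
    (h' : n + i < n + m) : Fin.append ρ β ⟨n + i, h'⟩ = β ⟨i, h⟩ :=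
  Fin.append_right ρ β ⟨i, h⟩

lemma List.finRange_add (n m : ℕ) :
    List.finRange (n + m) =
      (List.finRange n).map (Fin.castAdd m) ++ (List.finRange m).map (Fin.natAdd n) := by
  rw [← List.ofFn_id, List.ofFn_add, List.ofFn_eq_map, List.ofFn_eq_map]
  rfl

def Matrix.weightPreserving {ι κ S : Type*} [Fintype ι] [DecidableEq ι] [Semiring S]
    (w : ι → κ) : Submonoid (Matrix ι ι S) where
  carrier := {A | ∀ i j, A i j ≠ 0 → w i = w j}
  one_mem' i j h := by
    by_contra hij
    exact h (Matrix.one_apply_ne fun e => hij (congrArg w e))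
  mul_mem' {A B} hA hB i j h := by
    obtain ⟨k, -, hk⟩ := Finset.exists_ne_zero_of_sum_ne_zero h
    exact (hA i k (left_ne_zero_of_mul hk)).trans (hB k j (right_ne_zero_of_mul hk))

lemma Matrix.submatrix_list_prod_eq_blockDiagonal {ι α o q S : Type*} [Fintype α] [DecidableEq α]
    [Fintype o] [DecidableEq o] [Fintype q] [DecidableEq q] [Semiring S] (e : α × o ≃ q)
    (l : List ι) (F : ι → Matrix q q S) (G : ι → o → Matrix α α S)
    (h : ∀ j ∈ l, (F j).submatrix e e = Matrix.blockDiagonal (G j)) :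
    (l.map F).prod.submatrix e e = Matrix.blockDiagonal fun k => (l.map fun j => G j k).prod := by
  induction l with
  | nil =>
    rw [List.map_nil, List.prod_nil, Matrix.submatrix_one_equiv]
    exact Matrix.blockDiagonal_one.symm
  | cons j l ih =>
    simp only [List.map_cons, List.prod_cons]
    rw [← Matrix.submatrix_mul_equiv _ _ _ e, h j List.mem_cons_self,
      ih fun j hj => h j (List.mem_cons_of_mem _ hj), Matrix.blockDiagonal_mul]

section Weights

variable {N γ}

def weight {p : ℕ} (σ : Fin p → Fin N) : Fin N → ℂ := ∑ i, Pi.single (σ i) 1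

def weightOn {p : ℕ} (l : List (Fin p)) (σ : Fin p → Fin N) : Fin N → ℂ :=
  (l.map fun a => Pi.single (σ a) 1).sum

lemma weightOn_cons {p : ℕ} (a : Fin p) (l : List (Fin p)) (σ : Fin p → Fin N) :
    weightOn (a :: l) σ = Pi.single (σ a) 1 + weightOn l σ := by
  simp [weightOn]

lemma weightOn_update_of_notMem {p : ℕ} {l : List (Fin p)} {a : Fin p} (ha : a ∉ l)
    (σ : Fin p → Fin N) (b : Fin N) : weightOn l (Function.update σ a b) = weightOn l σ := by
  unfold weightOn
  congr 1
  refine List.map_congr_left fun c hc => ?_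
  rw [Function.update_of_ne (ne_of_mem_of_not_mem hc ha)]

lemma weightOn_finRange {p : ℕ} (σ : Fin p → Fin N) : weightOn (List.finRange p) σ = weight σ :=
  (Fin.sum_univ_def _).symm

lemma hsum_append {n m : ℕ} (ρ : Fin n → Fin N) (β : Fin m → Fin N) (s t : ℕ) :
    hsum N (n + m) s t (Fin.append ρ β) = hsum N n s t ρ + hsum N m (s - n) (t - n) β := by
  unfold hsum
  rw [Fin.sum_univ_add]
  congr 1
  · simp
  · refine Finset.sum_congr rfl fun j _ => ?_
    simp only [Fin.val_natAdd, Fin.append_right]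
    congr 1
    exact propext (by omega)

lemma hsum_eq_zero_of_le {p s t : ℕ} (h : min p t ≤ s) (σ : Fin p → Fin N) :
    hsum N p s t σ = 0 :=
  Finset.sum_eq_zero fun i _ => if_neg (by omega)

lemma hsum_zero_self {p : ℕ} (σ : Fin p → Fin N) : hsum N p 0 p σ = weight σ :=
  Finset.sum_congr rfl fun i _ => if_pos ⟨i.val.zero_le, i.isLt⟩

lemma RhatPair_mem_weightPreserving {R : (Fin N → ℂ) → Matrix (Fin N × Fin N) (Fin N × Fin N) ℂ}
    (hzw : ZeroWeight N R) {p a b : ℕ} (hab : a ≠ b) (f : (Fin p → Fin N) → Fin N → ℂ) :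
    RhatPair N R p a b f ∈ Matrix.weightPreserving weight := by
  unfold RhatPair
  split_ifs with hp
  · intro σ σ' hne
    simp only [Matrix.of_apply] at hne
    split_ifs at hne with hrest
    swap
    · exact absurd rfl hne
    have hpair := not_not.mp (mt (hzw _ _ _ _ _) hne)
    rw [← sub_eq_zero, weight, weight, ← Finset.sum_sub_distrib,
      Fintype.sum_eq_add ⟨a, hp.1⟩ ⟨b, hp.2⟩ (by simpa [Fin.ext_iff] using hab)
        fun i hi => by
          rw [hrest i (fun h => hi.1 (Fin.ext h)) (fun h => hi.2 (Fin.ext h)), sub_self]]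
    linear_combination hpair
  · exact Submonoid.one_mem _

lemma calI_mem_weightPreserving {R : (Fin N → ℂ) → Matrix (Fin N × Fin N) (Fin N × Fin N) ℂ}
    (hzw : ZeroWeight N R) {p k l : ℕ} (hk : 1 ≤ k) (base : (Fin p → Fin N) → Fin N → ℂ) :
    calI N γ R p k l base ∈ Matrix.weightPreserving weight := by
  refine Submonoid.list_prod_mem _ fun A hA => ?_
  obtain ⟨j, hj, rfl⟩ := List.mem_map.mp hA
  exact RhatPair_mem_weightPreserving hzw (by have := (List.mem_range'_1.mp hj).1; omega) _

end Weights

section LaxChain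

variable {N}
variable (L : Fin N → Fin N → (Vsp N W →ₗ[ℂ] Vsp N W))

def laxChainOn {p : ℕ} (l : List (Fin p)) :
    ((Fin N → ℂ) → (Fin p → Fin N) → W) → ((Fin N → ℂ) → (Fin p → Fin N) → W) :=
  l.foldr (fun a f => LopAux N L p a ∘ f) id

lemma LopChain_eq_laxChainOn (p : ℕ) : LopChain N L p = laxChainOn L (List.finRange p) := rfl

lemma laxChainOn_cons {p : ℕ} (a : Fin p) (l : List (Fin p))
    (v : (Fin N → ℂ) → (Fin p → Fin N) → W) (x : Fin N → ℂ) (σ : Fin p → Fin N) :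
    laxChainOn L (a :: l) v x σ =
      ∑ b, L (σ a) b (fun y => laxChainOn L l v y (Function.update σ a b)) x := rfl

lemma laxChainOn_append {p : ℕ} (l₁ l₂ : List (Fin p)) (v : (Fin N → ℂ) → (Fin p → Fin N) → W) :
    laxChainOn L (l₁ ++ l₂) v = laxChainOn L l₁ (laxChainOn L l₂ v) := by
  induction l₁ with
  | nil => rfl
  | cons a l ih => exact congrArg (LopAux N L p a) ih

lemma laxChainOn_congr {p : ℕ} (l : List (Fin p)) {v w : (Fin N → ℂ) → (Fin p → Fin N) → W}
    (x : Fin N → ℂ) (σ : Fin p → Fin N)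
    (h : ∀ y β, (∀ i ∉ l, β i = σ i) → v y β = w y β) :
    laxChainOn L l v x σ = laxChainOn L l w x σ := by
  induction l generalizing x σ with
  | nil => exact h x σ fun _ _ => rfl
  | cons a l ih =>
    simp only [laxChainOn_cons]
    refine Finset.sum_congr rfl fun b _ => congrArg (L (σ a) b · x) (funext fun y => ?_)
    refine ih y _ fun z β hβ => h z β fun i hi => ?_
    rw [hβ i (mt (List.mem_cons_of_mem a) hi),
      Function.update_of_ne (List.ne_of_not_mem_cons hi)]

lemma laxChainOn_sum {p : ℕ} {ι : Type*} (s : Finset ι) (l : List (Fin p))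
    (v : ι → (Fin N → ℂ) → (Fin p → Fin N) → W) :
    laxChainOn L l (fun y β => ∑ i ∈ s, v i y β) =
      fun x σ => ∑ i ∈ s, laxChainOn L l (v i) x σ := by
  induction l with
  | nil => rfl
  | cons a l ih =>
    funext x σ
    simp only [laxChainOn_cons, ih]
    rw [Finset.sum_comm]
    refine Finset.sum_congr rfl fun b _ => ?_
    rw [← Finset.sum_fn, map_sum, Finset.sum_apply]

lemma LopChain_sum {p : ℕ} {ι : Type*} (s : Finset ι) (v : ι → (Fin N → ℂ) → (Fin p → Fin N) → W) :
    LopChain N L p (fun y β => ∑ i ∈ s, v i y β) = fun x σ => ∑ i ∈ s, LopChain N L p (v i) x σ :=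
  laxChainOn_sum L s _ v

lemma laxChainOn_map_castAdd {n m : ℕ} (l : List (Fin n))
    (v : (Fin N → ℂ) → (Fin (n + m) → Fin N) → W) (x : Fin N → ℂ)
    (ρ : Fin n → Fin N) (β : Fin m → Fin N) :
    laxChainOn L (l.map (Fin.castAdd m)) v x (Fin.append ρ β) =
      laxChainOn L l (fun y ρ' => v y (Fin.append ρ' β)) x ρ := by
  induction l generalizing x ρ with
  | nil => rfl
  | cons a l ih =>
    simp only [List.map_cons, laxChainOn_cons, Fin.append_left, Fin.update_append_castAdd, ih]

lemma laxChainOn_map_natAdd {n m : ℕ} (l : List (Fin m))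
    (v : (Fin N → ℂ) → (Fin (n + m) → Fin N) → W) (x : Fin N → ℂ)
    (ρ : Fin n → Fin N) (β : Fin m → Fin N) :
    laxChainOn L (l.map (Fin.natAdd n)) v x (Fin.append ρ β) =
      laxChainOn L l (fun y β' => v y (Fin.append ρ β')) x β := by
  induction l generalizing x β with
  | nil => rfl
  | cons a l ih =>
    simp only [List.map_cons, laxChainOn_cons, Fin.append_right, Fin.update_append_natAdd, ih]

lemma LopChain_append {n m : ℕ} (v : (Fin N → ℂ) → (Fin (n + m) → Fin N) → W)
    (x : Fin N → ℂ) (τ : Fin n → Fin N) (σ : Fin m → Fin N) :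
    LopChain N L (n + m) v x (Fin.append τ σ) =
      LopChain N L n (fun y ρ => LopChain N L m (fun z β => v z (Fin.append ρ β)) y σ) x τ := by
  simp only [LopChain_eq_laxChainOn, List.finRange_add, laxChainOn_append, laxChainOn_map_castAdd,
    laxChainOn_map_natAdd]

end LaxChain

section Grading

variable {N γ}

structure IsGrading {ι : Type*} (M : Finset ι) (π : ι → Module.End ℂ W) : Prop where
  idem : ∀ μ, π μ ∘ₗ π μ = π μ
  orth : ∀ μ ν, μ ≠ ν → π μ ∘ₗ π ν = 0
  sum_eq_id : ∑ μ ∈ M, π μ = LinearMap.id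
  eq_zero_of_notMem : ∀ μ ∉ M, π μ = 0

def LaxShiftsWeight (π : (Fin N → ℂ) → Module.End ℂ W)
    (L : Fin N → Fin N → (Vsp N W →ₗ[ℂ] Vsp N W)) : Prop :=
  ∀ (a b : Fin N) (μ : Fin N → ℂ) (u : Vsp N W), (∀ x, π μ (u x) = u x) →
    ∀ x, π (μ - (Pi.single a 1 : Fin N → ℂ) + Pi.single b 1) (L a b u x) = L a b u x

def LaxCommutesPhi (M : Finset (Fin N → ℂ)) (π : (Fin N → ℂ) → Module.End ℂ W) (γ : ℂ)
    (L : Fin N → Fin N → (Vsp N W →ₗ[ℂ] Vsp N W)) : Prop :=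
  ∀ (f : (Fin N → ℂ) → ℂ) (a b : Fin N) (u : Vsp N W),
    Phi N M π (-γ) f (L a b u) =
      L a b (Phi N M π (-γ) (fun y => f (y - (2 * γ) • (Pi.single b 1 : Fin N → ℂ))) u)

variable {M : Finset (Fin N → ℂ)} {π : (Fin N → ℂ) → Module.End ℂ W}
  {L : Fin N → Fin N → (Vsp N W →ₗ[ℂ] Vsp N W)}

lemma IsGrading.idem_apply {ι : Type*} {M : Finset ι} {π : ι → Module.End ℂ W}
    (hπ : IsGrading M π) (μ : ι) (w : W) : π μ (π μ w) = π μ w :=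
  LinearMap.congr_fun (hπ.idem μ) w

lemma IsGrading.sum_apply {ι : Type*} {M : Finset ι} {π : ι → Module.End ℂ W}
    (hπ : IsGrading M π) (w : W) : ∑ μ ∈ M, π μ w = w := by
  rw [← LinearMap.sum_apply, hπ.sum_eq_id, LinearMap.id_apply]

lemma Phi_of_homogeneous (hπ : IsGrading M π) {μ : Fin N → ℂ} {v : Vsp N W}
    (hv : ∀ x, π μ (v x) = v x) (s : ℂ) (f : (Fin N → ℂ) → ℂ) :
    Phi N M π s f v = fun x => f (x + s • μ) • v x := by
  funext x
  by_cases hμ : μ ∈ M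
  · refine (Finset.sum_eq_single μ (fun ν _ hν => ?_) (absurd hμ)).trans (by rw [hv])
    rw [← hv, ← LinearMap.comp_apply, hπ.orth ν μ hν, LinearMap.zero_apply, smul_zero]
  · have hv0 : v x = 0 := by rw [← hv, hπ.eq_zero_of_notMem μ hμ, LinearMap.zero_apply]
    simp [Phi, hv0]

lemma smul_L_of_homogeneous (hπ : IsGrading M π) (hgr : LaxShiftsWeight π L)
    (hshift : LaxCommutesPhi M π γ L) (f : (Fin N → ℂ) → ℂ) (a b : Fin N) {μ : Fin N → ℂ}
    {u : Vsp N W} (hu : ∀ x, π μ (u x) = u x) :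
    (fun x => f x • L a b u x) =
      L a b (fun y => f (y - γ • ((Pi.single a 1 : Fin N → ℂ) + Pi.single b 1)) • u y) := by
  set μ' : Fin N → ℂ := μ - Pi.single a 1 + Pi.single b 1
  -- `L_{ab} u` is homogeneous of weight `μ'`, where `Phi` evaluates at `x - γμ'`.
  have key := hshift (fun y => f (y + γ • μ')) a b u
  rw [Phi_of_homogeneous hπ (hgr a b μ u hu), Phi_of_homogeneous hπ hu] at key
  convert key using 3 with x y
  · congr 1; module
  · congr 2; module

lemma smul_L (hπ : IsGrading M π) (hgr : LaxShiftsWeight π L) (hshift : LaxCommutesPhi M π γ L)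
    (f : (Fin N → ℂ) → ℂ) (a b : Fin N) (u : Vsp N W) :
    (fun x => f x • L a b u x) =
      L a b (fun y => f (y - γ • ((Pi.single a 1 : Fin N → ℂ) + Pi.single b 1)) • u y) := by
  have hdecomp : u = ∑ μ ∈ M, fun y => π μ (u y) := by
    funext y
    rw [Finset.sum_apply, hπ.sum_apply]
  conv_lhs => rw [hdecomp]
  simp only [map_sum, Finset.sum_apply, Finset.smul_sum]
  rw [← Finset.sum_fn]
  simp only [fun μ => smul_L_of_homogeneous hπ hgr hshift f a b (hπ.idem_apply μ <| u ·)]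
  rw [← map_sum]
  congr 1
  funext y
  simp only [Finset.sum_apply, ← Finset.smul_sum, hπ.sum_apply]

end Grading

section ChainShift

variable {N γ} {M : Finset (Fin N → ℂ)} {π : (Fin N → ℂ) → Module.End ℂ W}
  {L : Fin N → Fin N → (Vsp N W →ₗ[ℂ] Vsp N W)}

lemma smul_laxChainOn (hπ : IsGrading M π) (hgr : LaxShiftsWeight π L)
    (hshift : LaxCommutesPhi M π γ L) {p : ℕ} (l : List (Fin p)) (hl : l.Nodup)
    (f : (Fin N → ℂ) → ℂ) (v : (Fin N → ℂ) → (Fin p → Fin N) → W)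
    (x : Fin N → ℂ) (σ : Fin p → Fin N) :
    f x • laxChainOn L l v x σ =
      laxChainOn L l (fun z β => f (z - γ • (weightOn l σ + weightOn l β)) • v z β) x σ := by
  induction l generalizing f x σ with
  | nil => simp [weightOn, laxChainOn]
  | cons a l ih =>
    obtain ⟨ha, hl⟩ := List.nodup_cons.mp hl
    simp only [laxChainOn_cons, Finset.smul_sum]
    refine Finset.sum_congr rfl fun b _ => ?_
    refine (congrFun (smul_L hπ hgr hshift f (σ a) b _) x).trans ?_
    refine congrArg (L (σ a) b · x) (funext fun y => ?_)
    have ih' := ih hl (fun z => f (z - γ • (Pi.single (σ a) 1 + Pi.single b 1))) y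
      (Function.update σ a b)
    beta_reduce at ih'
    rw [ih']
    refine laxChainOn_congr L l y _ fun z β hβ => ?_
    have hβa : β a = b := by rw [hβ a ha, Function.update_self]
    rw [weightOn_update_of_notMem ha, weightOn_cons, weightOn_cons, hβa]
    congr 2
    module

lemma smul_LopChain_of_weightPreserving (hπ : IsGrading M π) (hgr : LaxShiftsWeight π L)
    (hshift : LaxCommutesPhi M π γ L) {p : ℕ}
    {A : (Fin N → ℂ) → Matrix (Fin p → Fin N) (Fin p → Fin N) ℂ}
    (hA : ∀ z, A z ∈ Matrix.weightPreserving weight) (f : (Fin N → ℂ) → ℂ) (u : Vsp N W)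
    (x : Fin N → ℂ) (σ : Fin p → Fin N) :
    f x • LopChain N L p (fun z β => A z β σ • u z) x σ =
      LopChain N L p (fun z β => (f (z - (2 * γ) • weight β) * A z β σ) • u z) x σ := by
  rw [LopChain_eq_laxChainOn, smul_laxChainOn hπ hgr hshift _ (List.nodup_finRange p)]
  congr 1
  funext z β
  rw [weightOn_finRange, weightOn_finRange, smul_smul]
  by_cases hAβ : A z β σ = 0
  · simp [hAβ]
  · rw [hA z β σ hAβ]
    congr 3
    module

end ChainShift

section Blocks

variable {N γ} {R : (Fin N → ℂ) → Matrix (Fin N × Fin N) (Fin N × Fin N) ℂ} {n m : ℕ}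

lemma RhatPair_append_left {a b : ℕ} (ha : a < n) (hb : b < n)
    (f : (Fin (n + m) → Fin N) → Fin N → ℂ) :
    (RhatPair N R (n + m) a b f).submatrix (Fin.appendEquiv n m) (Fin.appendEquiv n m) =
      Matrix.blockDiagonal fun β => RhatPair N R n a b fun ρ => f (Fin.append ρ β) := by
  ext ⟨ρ, β⟩ ⟨ρ', β'⟩
  have hcond : (∀ i : Fin (n + m), (i : ℕ) ≠ a → (i : ℕ) ≠ b →
        Fin.append ρ β i = Fin.append ρ' β' i) ↔
      β = β' ∧ ∀ i : Fin n, (i : ℕ) ≠ a → (i : ℕ) ≠ b → ρ i = ρ' i := by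
    rw [Fin.forall_fin_add, funext_iff, and_comm]
    refine and_congr (forall_congr' fun j => ?_) (forall_congr' fun i => ?_)
    · simp only [Fin.val_natAdd, Fin.append_right]
      exact ⟨fun h => h (by omega) (by omega), fun h _ _ => h⟩
    · simp only [Fin.val_castAdd, Fin.append_left]
  simp only [Fin.append_mk_left (h := ha), Fin.append_mk_left (h := hb), RhatPair,
    dif_pos (And.intro (Nat.lt_add_right m ha) (Nat.lt_add_right m hb)), dif_pos (And.intro ha hb),
    Matrix.submatrix_apply, Fin.appendEquiv_apply,
    Matrix.blockDiagonal_apply, Matrix.of_apply, hcond, ite_and]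
  rfl

lemma RhatPair_append_right {a b : ℕ} (ha : a < m) (hb : b < m)
    (f : (Fin (n + m) → Fin N) → Fin N → ℂ) :
    (RhatPair N R (n + m) (n + a) (n + b) f).submatrix
        ((Equiv.prodComm _ _).trans (Fin.appendEquiv n m))
        ((Equiv.prodComm _ _).trans (Fin.appendEquiv n m)) =
      Matrix.blockDiagonal fun ρ => RhatPair N R m a b fun β => f (Fin.append ρ β) := by
  ext ⟨β, ρ⟩ ⟨β', ρ'⟩
  have hcond : (∀ i : Fin (n + m), (i : ℕ) ≠ n + a → (i : ℕ) ≠ n + b →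
        Fin.append ρ β i = Fin.append ρ' β' i) ↔
      ρ = ρ' ∧ ∀ j : Fin m, (j : ℕ) ≠ a → (j : ℕ) ≠ b → β j = β' j := by
    rw [Fin.forall_fin_add, funext_iff]
    refine and_congr (forall_congr' fun i => ?_) (forall_congr' fun j => ?_)
    · simp only [Fin.val_castAdd, Fin.append_left]
      exact ⟨fun h => h (by omega) (by omega), fun h _ _ => h⟩
    · simp only [Fin.val_natAdd, Fin.append_right]
      omega
  simp only [Fin.append_mk_right (h := ha), Fin.append_mk_right (h := hb), RhatPair,
    dif_pos (And.intro (Nat.add_lt_add_left ha n) (Nat.add_lt_add_left hb n)),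
    dif_pos (And.intro ha hb), Matrix.submatrix_apply, Equiv.trans_apply, Equiv.prodComm_apply,
    Prod.fst_swap, Prod.snd_swap, Fin.appendEquiv_apply, Matrix.blockDiagonal_apply,
    Matrix.of_apply, hcond, ite_and]
  rfl

lemma calI_append_left (y : Fin N → ℂ) :
    (calI N γ R (n + m) 1 n fun σ => y - (2 * γ) • hsum N (n + m) n (n + m) σ).submatrix
        (Fin.appendEquiv n m) (Fin.appendEquiv n m) =
      Matrix.blockDiagonal fun β => calI N γ R n 1 n fun _ => y - (2 * γ) • weight β := by
  refine Matrix.submatrix_list_prod_eq_blockDiagonal _ _ _ _ fun j hj => ?_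
  obtain ⟨hj1, hjn⟩ := List.mem_range'_1.mp hj
  rw [RhatPair_append_left (by omega) (by omega)]
  congr! 4 with β ρ
  have hlow : hsum N (n + m) (j + 1) n (Fin.append ρ β) = hsum N n (j + 1) n ρ := by
    rw [hsum_append, hsum_eq_zero_of_le (by omega) β, add_zero]
  have htail : hsum N (n + m) n (n + m) (Fin.append ρ β) = weight β := by
    rw [hsum_append, hsum_eq_zero_of_le (by omega) ρ, zero_add, Nat.sub_self,
      Nat.add_sub_cancel_left, hsum_zero_self]
  dsimp only
  rw [hlow, htail]

lemma calI_append_right (y : Fin N → ℂ) :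
    (calI N γ R (n + m) (n + 1) (n + m) fun _ => y).submatrix
        ((Equiv.prodComm _ _).trans (Fin.appendEquiv n m))
        ((Equiv.prodComm _ _).trans (Fin.appendEquiv n m)) =
      Matrix.blockDiagonal fun _ => calI N γ R m 1 m fun _ => y := by
  unfold calI
  rw [show n + m - (n + 1) = m - 1 by omega, ← List.map_add_range', List.map_map]
  refine Matrix.submatrix_list_prod_eq_blockDiagonal _ _ _ _ fun j hj => ?_
  obtain ⟨hj1, hjm⟩ := List.mem_range'_1.mp hj
  simp only [Function.comp_apply, show n + j - 1 = n + (j - 1) by omega]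
  rw [RhatPair_append_right (by omega) (by omega)]
  congr! 4 with ρ β
  rw [hsum_append, hsum_eq_zero_of_le (by omega) ρ, zero_add,
    show n + j + 1 - n = j + 1 by omega, Nat.add_sub_cancel_left]

lemma calI_mul_calI_apply_append (y : Fin N → ℂ) (ρ τ : Fin n → Fin N) (β σ : Fin m → Fin N) :
    ((calI N γ R (n + m) 1 n fun σ' => y - (2 * γ) • hsum N (n + m) n (n + m) σ') *
        calI N γ R (n + m) (n + 1) (n + m) fun _ => y) (Fin.append ρ β) (Fin.append τ σ) =
      (calI N γ R n 1 n fun _ => y - (2 * γ) • weight β) ρ τ *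
        (calI N γ R m 1 m fun _ => y) β σ := by
  have hleft (ρ ρ' : Fin n → Fin N) (β β' : Fin m → Fin N) :=
    congrFun₂ (calI_append_left (γ := γ) (R := R) y) (ρ, β) (ρ', β')
  have hright (ρ ρ' : Fin n → Fin N) (β β' : Fin m → Fin N) :=
    congrFun₂ (calI_append_right (γ := γ) (R := R) y) (β, ρ) (β', ρ')
  simp only [Matrix.submatrix_apply, Equiv.trans_apply, Equiv.prodComm_apply, Prod.swap_prod_mk,
    Matrix.blockDiagonal_apply] at hleft hright
  rw [show Fin.append ρ β = Fin.appendEquiv n m (ρ, β) from rfl,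
    show Fin.append τ σ = Fin.appendEquiv n m (τ, σ) from rfl]
  rw [Matrix.mul_apply, ← (Fin.appendEquiv n m).sum_comp, Fintype.sum_prod_type]
  simp [hleft, hright, ite_mul, mul_ite]

end Blocks

section Traces

variable {N γ}

lemma mulMat_emb {p : ℕ} (A : (Fin N → ℂ) → Matrix (Fin p → Fin N) (Fin p → Fin N) ℂ)
    (σ : Fin p → Fin N) (v : Vsp N W) :
    mulMat N p A (emb N p σ v) = fun z β => A z β σ • v z := by
  funext z β
  simp [mulMat, emb]

variable (R : (Fin N → ℂ) → Matrix (Fin N × Fin N) (Fin N × Fin N) ℂ)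
  (L : Fin N → Fin N → (Vsp N W →ₗ[ℂ] Vsp N W))

lemma In_eq (p : ℕ) (u : Vsp N W) :
    In N γ R L p u = fun x => ∑ σ, LopChain N L p
      (fun z β => calI N γ R p 1 p (fun _ => z) β σ • u z) x σ := by
  funext x
  exact Finset.sum_congr rfl fun σ _ => by rw [mulMat_emb]

lemma Inm_apply (n m : ℕ) (u : Vsp N W) (x : Fin N → ℂ) :
    Inm N γ R L n m u x = ∑ τ, ∑ σ, LopChain N L n (fun y ρ => LopChain N L m
      (fun z β => ((calI N γ R n 1 n fun _ => z - (2 * γ) • weight β) ρ τ *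
        (calI N γ R m 1 m fun _ => z) β σ) • u z) y σ) x τ := by
  rw [Inm, ← (Fin.appendEquiv n m).sum_comp, Fintype.sum_prod_type]
  refine Finset.sum_congr rfl fun τ _ => Finset.sum_congr rfl fun σ _ => ?_
  rw [mulMat_emb]
  refine (LopChain_append L _ x τ σ).trans (congrArg (LopChain N L n · x τ) ?_)
  funext y ρ
  exact congrArg (LopChain N L m · y σ) (funext fun z => funext fun β =>
    congrArg (· • u z) (calI_mul_calI_apply_append z ρ τ β σ))

end Traces

theorem lemma1_In_Im_as_combined_trace
    (R : (Fin N → ℂ) → Matrix (Fin N × Fin N) (Fin N × Fin N) ℂ)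
    (hzw : ZeroWeight N R)
    -- the graded quantum space W = ⊕_{μ∈M} W_μ, with 0 ∈ M
    (M : Finset (Fin N → ℂ))
    (π : (Fin N → ℂ) → Module.End ℂ W)
    (hidem : ∀ μ, π μ ∘ₗ π μ = π μ)
    (horth : ∀ μ ν, μ ≠ ν → π μ ∘ₗ π ν = 0)
    (hcompl : (∑ μ ∈ M, π μ) = LinearMap.id)
    (hsupp : ∀ μ ∉ M, π μ = 0)
    (L : Fin N → Fin N → (Vsp N W →ₗ[ℂ] Vsp N W))
    -- (iv) grading condition on L
    (hgr : ∀ (a b : Fin N) (μ : Fin N → ℂ) (u : Vsp N W),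
      (∀ x, π μ (u x) = u x) →
      ∀ x, π (μ - (Pi.single a 1 : Fin N → ℂ) + Pi.single b 1) (L a b u x) = L a b u x)
    -- (v) shift properties of L
    (hshift1 : ∀ (f : (Fin N → ℂ) → ℂ) (a b : Fin N) (u : Vsp N W),
      Phi N M π (-γ) f (L a b u) =
        L a b (Phi N M π (-γ) (fun y => f (y - (2*γ) • (Pi.single b 1 : Fin N → ℂ))) u)) :
    ∀ n m : ℕ, 1 ≤ n → 1 ≤ m → ∀ u : Vsp N W, inV0 N π u →
      In N γ R L n (In N γ R L m u) = Inm N γ R L n m u := by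
  intro n m _ _ u _
  have hπ : IsGrading M π := ⟨hidem, horth, hcompl, hsupp⟩
  funext x
  rw [Inm_apply, In_eq, In_eq]
  simp only [Finset.smul_sum, LopChain_sum]
  refine Finset.sum_congr rfl fun τ _ => Finset.sum_congr rfl fun σ _ =>
    congrArg (LopChain N L n · x τ) (funext fun y => funext fun ρ => ?_)
  exact smul_LopChain_of_weightPreserving hπ hgr hshift1
    (fun _ => calI_mem_weightPreserving hzw le_rfl _)
    (fun z => calI N γ R n 1 n (fun _ => z) ρ τ) u y σ
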